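/- Let V be a maximum edge-disjoint triangle packing of a finite simple graph G and let ψ ∈ V be of type 3 (all three edges of ψ are base edges of singly-attached triangles). Then there are exactly three triangles singly-attached to ψ, all three have the same anchoring vertex a, and the vertex a is adjacent in G to all three vertices of ψ; in particular, the four vertices V(ψ) ∪ {a} induce a complete graph K₄ in G. -/
import Mathlib


open Finset

/-- The edge set of a triangle `t` (a set of vertices): all unordered pairs of
distinct vertices of `t`. -/
def triEdges {V : Type*} [DecidableEq V] (t : Finset V) : Finset (Sym2 V) :=
  t.sym2.filter (fun e => ¬ e.IsDiag)

/-- `P` is a collection of pairwise edge-disjoint triangles of `G`. -/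
def IsTrianglePacking {V : Type*} [DecidableEq V] (G : SimpleGraph V)
    (P : Finset (Finset V)) : Prop :=
  (∀ t ∈ P, G.IsNClique 3 t) ∧
    ∀ t₁ ∈ P, ∀ t₂ ∈ P, t₁ ≠ t₂ → Disjoint (triEdges t₁) (triEdges t₂)

/-- The triangle packing number `ν(G)`: the maximum number of pairwise
edge-disjoint triangles in `G`. -/
noncomputable def packingNumber {V : Type*} [DecidableEq V] (G : SimpleGraph V) : ℕ :=
  sSup {n | ∃ P : Finset (Finset V), IsTrianglePacking G P ∧ P.card = n}

/-- `P` is a maximum edge-disjoint triangle packing of `G`. -/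
def IsMaxTrianglePacking {V : Type*} [DecidableEq V] (G : SimpleGraph V)
    (P : Finset (Finset V)) : Prop :=
  IsTrianglePacking G P ∧
    ∀ Q : Finset (Finset V), IsTrianglePacking G Q → Q.card ≤ P.card

/-- `t` is a triangle of `G`, not in the packing `P`, and `ψ` is the unique
member of `P` sharing an edge with `t`. -/
def SinglyAttached {V : Type*} [DecidableEq V] (G : SimpleGraph V)
    (P : Finset (Finset V)) (t ψ : Finset V) : Prop :=
  G.IsNClique 3 t ∧ t ∉ P ∧ ψ ∈ P ∧ (triEdges t ∩ triEdges ψ).Nonempty ∧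
    ∀ ψ' ∈ P, (triEdges t ∩ triEdges ψ').Nonempty → ψ' = ψ

/-- The base edges of a solution triangle `ψ ∈ P`: the edges of `ψ` that are
shared with some triangle singly-attached to `ψ`. -/
def baseEdges {V : Type*} [DecidableEq V] (G : SimpleGraph V)
    (P : Finset (Finset V)) (ψ : Finset V) : Set (Sym2 V) :=
  {e | e ∈ triEdges ψ ∧ ∃ t, SinglyAttached G P t ψ ∧ e ∈ triEdges t}

lemma mem_triEdges {V : Type*} [DecidableEq V] {t : Finset V} {u v : V} :
    s(u,v) ∈ triEdges t ↔ u ∈ t ∧ v ∈ t ∧ u ≠ v := by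
  simp [triEdges, Finset.mem_sym2_iff]; tauto

lemma mem_triEdges_iff {V : Type*} [DecidableEq V] {t : Finset V} {e : Sym2 V} :
    e ∈ triEdges t ↔ ∃ u v, u ∈ t ∧ v ∈ t ∧ u ≠ v ∧ e = s(u,v) := by
  induction e using Sym2.ind with
  | _ a b =>
    constructor
    · intro h; exact ⟨a, b, (mem_triEdges.mp h).1, (mem_triEdges.mp h).2.1,
        (mem_triEdges.mp h).2.2, rfl⟩
    · rintro ⟨u, v, hu, hv, huv, he⟩
      rw [Sym2.eq_iff] at he
      rcases he with ⟨rfl, rfl⟩ | ⟨rfl, rfl⟩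
      · exact mem_triEdges.mpr ⟨hu, hv, huv⟩
      · exact mem_triEdges.mpr ⟨hv, hu, huv.symm⟩

lemma attached_decomp {V : Type*} [DecidableEq V] {G : SimpleGraph V}
    {P : Finset (Finset V)} {t ψ : Finset V}
    (hP : IsTrianglePacking G P) (h : SinglyAttached G P t ψ) {e : Sym2 V}
    (het : e ∈ triEdges t) (heψ : e ∈ triEdges ψ) :
    ∃ u v w, u ∈ ψ ∧ v ∈ ψ ∧ u ≠ v ∧ w ∉ ψ ∧ e = s(u,v) ∧ t = {u,v,w} ∧ t \ ψ = {w} := by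
  obtain ⟨u, v, hu, hv, huv, rfl⟩ := mem_triEdges_iff.mp het
  have huψ : u ∈ ψ := (mem_triEdges.mp heψ).1
  have hvψ : v ∈ ψ := (mem_triEdges.mp heψ).2.1
  have hct : t.card = 3 := h.1.card_eq
  have hcψ : ψ.card = 3 := (hP.1 ψ h.2.2.1).card_eq
  have hsub : {u, v} ⊆ t := by
    intro s hs; rcases Finset.mem_insert.mp hs with rfl | hs
    · exact hu
    · exact (Finset.mem_singleton.mp hs) ▸ hv
  have hcard : (t \ {u, v}).card = 1 := by
    rw [Finset.card_sdiff_of_subset hsub, hct, Finset.card_pair huv]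
  obtain ⟨w, hw⟩ := Finset.card_eq_one.mp hcard
  have htw : t = {u, v, w} := by
    have := Finset.union_sdiff_of_subset hsub
    rw [hw] at this
    rw [← this]
    ext s; simp [or_assoc]
  have hwψ : w ∉ ψ := by
    intro hwmem
    have hsub2 : t ⊆ ψ := by
      rw [htw]; intro s hs
      rcases Finset.mem_insert.mp hs with rfl | hs
      · exact huψ
      rcases Finset.mem_insert.mp hs with rfl | hs
      · exact hvψ
      · exact (Finset.mem_singleton.mp hs) ▸ hwmem
    have : t = ψ := Finset.eq_of_subset_of_card_le hsub2 (by omega)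
    exact h.2.1 (this ▸ h.2.2.1)
  refine ⟨u, v, w, huψ, hvψ, huv, hwψ, rfl, htw, ?_⟩
  ext s
  simp only [Finset.mem_sdiff, htw, Finset.mem_insert, Finset.mem_singleton]
  constructor
  · rintro ⟨rfl | rfl | rfl, hsψ⟩ <;> tauto
  · rintro rfl; exact ⟨Or.inr (Or.inr rfl), hwψ⟩

lemma exchange {V : Type*} [DecidableEq V] {G : SimpleGraph V}
    {P : Finset (Finset V)} {t₁ t₂ ψ : Finset V}
    (hP : IsMaxTrianglePacking G P)
    (h1 : SinglyAttached G P t₁ ψ) (h2 : SinglyAttached G P t₂ ψ)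
    (hd : Disjoint (triEdges t₁) (triEdges t₂)) : False := by
  have hψP : ψ ∈ P := h1.2.2.1
  obtain ⟨e, he⟩ := h1.2.2.2.1
  have he1 : e ∈ triEdges t₁ := (Finset.mem_inter.mp he).1
  have hne12 : t₁ ≠ t₂ := by
    rintro rfl
    exact (Finset.disjoint_left.mp hd he1) he1
  have disj1 : ∀ ψ' ∈ P, ψ' ≠ ψ → Disjoint (triEdges t₁) (triEdges ψ') := by
    intro ψ' hψ' hne
    by_contra hnd
    rw [Finset.not_disjoint_iff_nonempty_inter] at hnd
    exact hne (h1.2.2.2.2 ψ' hψ' hnd)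
  have disj2 : ∀ ψ' ∈ P, ψ' ≠ ψ → Disjoint (triEdges t₂) (triEdges ψ') := by
    intro ψ' hψ' hne
    by_contra hnd
    rw [Finset.not_disjoint_iff_nonempty_inter] at hnd
    exact hne (h2.2.2.2.2 ψ' hψ' hnd)
  set Q := insert t₁ (insert t₂ (P.erase ψ)) with hQ
  have ht1 : t₁ ∉ insert t₂ (P.erase ψ) := by
    simp only [Finset.mem_insert, Finset.mem_erase]
    rintro (rfl | ⟨-, hmem⟩)
    · exact hne12 rfl
    · exact h1.2.1 hmem
  have ht2 : t₂ ∉ P.erase ψ := fun hm => h2.2.1 (Finset.mem_of_mem_erase hm)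
  have hQcard : Q.card = P.card + 1 := by
    rw [hQ, Finset.card_insert_of_notMem ht1, Finset.card_insert_of_notMem ht2,
      Finset.card_erase_of_mem hψP]
    have : 1 ≤ P.card := Finset.card_pos.mpr ⟨ψ, hψP⟩
    omega
  have hQpack : IsTrianglePacking G Q := by
    constructor
    · intro s hs
      rcases Finset.mem_insert.mp hs with rfl | hs
      · exact h1.1
      rcases Finset.mem_insert.mp hs with rfl | hs
      · exact h2.1
      · exact hP.1.1 s (Finset.mem_of_mem_erase hs)
    · intro a ha b hb hab
      simp only [hQ, Finset.mem_insert, Finset.mem_erase] at ha hb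
      rcases ha with rfl | rfl | ⟨hane, haP⟩ <;>
        rcases hb with rfl | rfl | ⟨hbne, hbP⟩
      · exact absurd rfl hab
      · exact hd
      · exact disj1 b hbP hbne
      · exact hd.symm
      · exact absurd rfl hab
      · exact disj2 b hbP hbne
      · exact (disj1 a haP hane).symm
      · exact (disj2 a haP hane).symm
      · exact hP.1.2 a haP b hbP hab
  have := hP.2 Q hQpack
  omega

lemma anchor_eq {V : Type*} [DecidableEq V] {G : SimpleGraph V}
    {P : Finset (Finset V)} {t₁ t₂ ψ : Finset V}
    (hP : IsMaxTrianglePacking G P)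
    (h1 : SinglyAttached G P t₁ ψ) (h2 : SinglyAttached G P t₂ ψ)
    {u₁ v₁ w₁ u₂ v₂ w₂ : V}
    (hu1 : u₁ ∈ ψ) (hv1 : v₁ ∈ ψ) (hw1 : w₁ ∉ ψ) (ht1 : t₁ = {u₁, v₁, w₁})
    (hu2 : u₂ ∈ ψ) (hv2 : v₂ ∈ ψ) (hw2 : w₂ ∉ ψ) (ht2 : t₂ = {u₂, v₂, w₂})
    (hne : s(u₁,v₁) ≠ s(u₂,v₂)) : w₁ = w₂ := by
  by_contra hww
  apply exchange hP h1 h2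
  rw [Finset.disjoint_left]
  intro e he1 he2
  obtain ⟨a, b, ha1, hb1, hab, rfl⟩ := mem_triEdges_iff.mp he1
  have ha2 : a ∈ t₂ := (mem_triEdges.mp he2).1
  have hb2 : b ∈ t₂ := (mem_triEdges.mp he2).2.1
  have key : ∀ s, s ∈ t₁ → s ∈ t₂ → (s = u₁ ∨ s = v₁) ∧ (s = u₂ ∨ s = v₂) := by
    intro s hs1 hs2
    rw [ht1] at hs1; rw [ht2] at hs2
    simp only [Finset.mem_insert, Finset.mem_singleton] at hs1 hs2
    constructor
    · rcases hs1 with rfl | rfl | rfl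
      · exact Or.inl rfl
      · exact Or.inr rfl
      · rcases hs2 with rfl | rfl | rfl
        · exact absurd hu2 hw1
        · exact absurd hv2 hw1
        · exact absurd rfl hww
    · rcases hs2 with rfl | rfl | rfl
      · exact Or.inl rfl
      · exact Or.inr rfl
      · rcases hs1 with rfl | rfl | rfl
        · exact absurd hu1 hw2
        · exact absurd hv1 hw2
        · exact absurd rfl hww
  obtain ⟨ha1', ha2'⟩ := key a ha1 ha2
  obtain ⟨hb1', hb2'⟩ := key b hb1 hb2
  apply hne
  have e1 : s(a,b) = s(u₁,v₁) := by
    rcases ha1' with rfl | rfl <;> rcases hb1' with rfl | rfl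
    · exact absurd rfl hab
    · rfl
    · exact Sym2.eq_swap
    · exact absurd rfl hab
  have e2 : s(a,b) = s(u₂,v₂) := by
    rcases ha2' with rfl | rfl <;> rcases hb2' with rfl | rfl
    · exact absurd rfl hab
    · rfl
    · exact Sym2.eq_swap
    · exact absurd rfl hab
  rw [← e1, e2]

lemma witness_of_base {V : Type*} [DecidableEq V] {G : SimpleGraph V}
    {P : Finset (Finset V)} {ψ : Finset V} (hP : IsTrianglePacking G P) {x y : V}
    (hb : s(x,y) ∈ baseEdges G P ψ) :
    ∃ t w, SinglyAttached G P t ψ ∧ w ∉ ψ ∧ t = {x,y,w} ∧ t \ ψ = {w} := by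
  obtain ⟨heψ, t, hatt, het⟩ := hb
  obtain ⟨u, v, w, huψ, hvψ, huv, hwψ, heq, htw, hts⟩ := attached_decomp hP hatt het heψ
  rw [Sym2.eq_iff] at heq
  rcases heq with ⟨rfl, rfl⟩ | ⟨rfl, rfl⟩
  · exact ⟨t, w, hatt, hwψ, htw, hts⟩
  · exact ⟨t, w, hatt, hwψ, by rw [htw]; ext s; simp; tauto, hts⟩

set_option maxHeartbeats 2000000 in
/-- A type-3 solution triangle has exactly three singly-attached triangles, all
sharing a common anchoring vertex `a`, and `V(ψ) ∪ {a}` induces a `K₄`. -/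
theorem type_three_structure {V : Type*} [Fintype V] [DecidableEq V]
    (G : SimpleGraph V) (P : Finset (Finset V))
    (hP : IsMaxTrianglePacking G P) (ψ : Finset V) (hψ : ψ ∈ P)
    (h3 : (baseEdges G P ψ).ncard = 3) :
    {t : Finset V | SinglyAttached G P t ψ}.ncard = 3 ∧
    ∃ a : V, a ∉ ψ ∧
      (∀ t : Finset V, SinglyAttached G P t ψ → t \ ψ = {a}) ∧
      ∀ v ∈ ψ, G.Adj a v := by
  obtain ⟨x, y, z, hxy, hxz, hyz, hψxyz⟩ :=
    Finset.card_eq_three.mp (hP.1.1 ψ hψ).card_eq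
  have hxψ : x ∈ ψ := by rw [hψxyz]; simp
  have hyψ : y ∈ ψ := by rw [hψxyz]; simp
  have hzψ : z ∈ ψ := by rw [hψxyz]; simp
  have nxy_xz : s(x,y) ≠ s(x,z) := by simp [Sym2.eq_iff]; tauto
  have nxy_yz : s(x,y) ≠ s(y,z) := by simp [Sym2.eq_iff]; tauto
  have nxz_yz : s(x,z) ≠ s(y,z) := by simp [Sym2.eq_iff]; tauto
  have hψedges : triEdges ψ = {s(x,y), s(x,z), s(y,z)} := by
    ext e
    induction e using Sym2.ind with
    | _ a b =>
      simp only [mem_triEdges, hψxyz, Finset.mem_insert, Finset.mem_singleton, Sym2.eq_iff]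
      constructor
      · rintro ⟨(rfl | rfl | rfl), (rfl | rfl | rfl), hne⟩ <;> tauto
      · rintro ((⟨rfl, rfl⟩ | ⟨rfl, rfl⟩) | (⟨rfl, rfl⟩ | ⟨rfl, rfl⟩) |
          (⟨rfl, rfl⟩ | ⟨rfl, rfl⟩)) <;> simp_all <;> tauto
  have hcard3 : (triEdges ψ).card = 3 := by
    rw [hψedges]
    exact Finset.card_eq_three.mpr ⟨_, _, _, nxy_xz, nxy_yz, nxz_yz, rfl⟩
  have hbase : baseEdges G P ψ = ↑(triEdges ψ) := by
    apply Set.eq_of_subset_of_ncard_le (fun e he => Finset.mem_coe.mpr he.1)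
    · rw [Set.ncard_coe_finset, hcard3, h3]
  have hbxy : s(x,y) ∈ baseEdges G P ψ := by
    rw [hbase]; exact Finset.mem_coe.mpr (mem_triEdges.mpr ⟨hxψ, hyψ, hxy⟩)
  have hbxz : s(x,z) ∈ baseEdges G P ψ := by
    rw [hbase]; exact Finset.mem_coe.mpr (mem_triEdges.mpr ⟨hxψ, hzψ, hxz⟩)
  have hbyz : s(y,z) ∈ baseEdges G P ψ := by
    rw [hbase]; exact Finset.mem_coe.mpr (mem_triEdges.mpr ⟨hyψ, hzψ, hyz⟩)
  obtain ⟨t₁, w₁, h1att, hw1, ht1, hts1⟩ := witness_of_base hP.1 hbxy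
  obtain ⟨t₂, w₂, h2att, hw2, ht2, hts2⟩ := witness_of_base hP.1 hbxz
  obtain ⟨t₃, w₃, h3att, hw3, ht3, hts3⟩ := witness_of_base hP.1 hbyz
  have e12 : w₁ = w₂ := anchor_eq hP h1att h2att hxψ hyψ hw1 ht1 hxψ hzψ hw2 ht2 nxy_xz
  have e13 : w₁ = w₃ := anchor_eq hP h1att h3att hxψ hyψ hw1 ht1 hyψ hzψ hw3 ht3 nxy_yz
  set a := w₁ with ha
  have haψ : a ∉ ψ := hw1
  -- every singly-attached triangle has anchor a
  have hanchor : ∀ t : Finset V, SinglyAttached G P t ψ → t \ ψ = {a} := by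
    intro t ht
    obtain ⟨e, he⟩ := ht.2.2.2.1
    obtain ⟨u, v, w, huψ, hvψ, huv, hwψ, heq, htw, hts⟩ :=
      attached_decomp hP.1 ht (Finset.mem_inter.mp he).1 (Finset.mem_inter.mp he).2
    rw [hts]
    congr 1
    by_cases hc : s(u,v) = s(x,y)
    · rw [anchor_eq hP ht h3att huψ hvψ hwψ htw hyψ hzψ hw3 ht3 (by rw [hc]; exact nxy_yz)]
      exact e13.symm
    · exact anchor_eq hP ht h1att huψ hvψ hwψ htw hxψ hyψ hw1 ht1 hc
  refine ⟨?_, a, haψ, hanchor, ?_⟩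
  · -- count: the set of singly attached triangles is {{x,y,a},{x,z,a},{y,z,a}}
    have hA1 : t₁ = {x, y, a} := ht1
    have hA2 : t₂ = {x, z, a} := by rw [ht2, ← e12]
    have hA3 : t₃ = {y, z, a} := by rw [ht3, ← e13]
    have hax : a ≠ x := fun h => haψ (h ▸ hxψ)
    have hay : a ≠ y := fun h => haψ (h ▸ hyψ)
    have haz : a ≠ z := fun h => haψ (h ▸ hzψ)
    have hSeq : {t : Finset V | SinglyAttached G P t ψ} =
        {({x,y,a} : Finset V), {x,z,a}, {y,z,a}} := by
      ext t
      simp only [Set.mem_setOf_eq, Set.mem_insert_iff, Set.mem_singleton_iff]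
      constructor
      · intro ht
        obtain ⟨e, he⟩ := ht.2.2.2.1
        obtain ⟨u, v, w, huψ, hvψ, huv, hwψ, heq, htw, hts⟩ :=
          attached_decomp hP.1 ht (Finset.mem_inter.mp he).1 (Finset.mem_inter.mp he).2
        have hwa : w = a := by
          have := hanchor t ht
          rw [hts] at this
          exact Finset.singleton_injective this
        subst hwa
        rw [hψxyz] at huψ hvψ
        simp only [Finset.mem_insert, Finset.mem_singleton] at huψ hvψ
        have hswap : ∀ p q r : V, ({p, q, r} : Finset V) = {q, p, r} := by
          intro p q r; ext s; simp only [Finset.mem_insert, Finset.mem_singleton]; tauto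
        rcases huψ with h | h | h <;> rcases hvψ with h' | h' | h'
        · exact absurd (h.trans h'.symm) huv
        · exact Or.inl (by rw [htw, h, h'])
        · exact Or.inr (Or.inl (by rw [htw, h, h']))
        · exact Or.inl (by rw [htw, h, h']; exact hswap y x a)
        · exact absurd (h.trans h'.symm) huv
        · exact Or.inr (Or.inr (by rw [htw, h, h']))
        · exact Or.inr (Or.inl (by rw [htw, h, h']; exact hswap z x a))
        · exact Or.inr (Or.inr (by rw [htw, h, h']; exact hswap z y a))
        · exact absurd (h.trans h'.symm) huv
      · rintro (rfl | rfl | rfl)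
        · exact hA1 ▸ h1att
        · exact hA2 ▸ h2att
        · exact hA3 ▸ h3att
    rw [hSeq]
    rw [Set.ncard_eq_three]
    refine ⟨_, _, _, ?_, ?_, ?_, rfl⟩
    · intro h
      have : z ∈ ({x,y,a} : Finset V) := by rw [h]; simp
      simp only [Finset.mem_insert, Finset.mem_singleton] at this
      rcases this with rfl | rfl | rfl
      · exact hxz rfl
      · exact hyz rfl
      · exact haz rfl
    · intro h
      have : x ∈ ({y,z,a} : Finset V) := by rw [← h]; simp
      simp only [Finset.mem_insert, Finset.mem_singleton] at this
      rcases this with rfl | rfl | rfl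
      · exact hxy rfl
      · exact hxz rfl
      · exact hax rfl
    · intro h
      have : x ∈ ({y,z,a} : Finset V) := by rw [← h]; simp
      simp only [Finset.mem_insert, Finset.mem_singleton] at this
      rcases this with rfl | rfl | rfl
      · exact hxy rfl
      · exact hxz rfl
      · exact hax rfl
  · -- adjacency
    intro v hv
    rw [hψxyz] at hv
    have hax : a ≠ x := fun h => haψ (h ▸ hxψ)
    have hay : a ≠ y := fun h => haψ (h ▸ hyψ)
    have haz : a ≠ z := fun h => haψ (h ▸ hzψ)
    have hc1 := h1att.1.1
    have hc3 := h3att.1.1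
    simp only [Finset.mem_insert, Finset.mem_singleton] at hv
    rcases hv with rfl | rfl | rfl
    · exact hc1 (by rw [ht1]; simp) (by rw [ht1]; simp) hax
    · exact hc1 (by rw [ht1]; simp) (by rw [ht1]; simp) hay
    · exact hc3 (by rw [ht3, ← e13]; simp) (by rw [ht3]; simp) (e13 ▸ haz)
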